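/- arXiv:2106.05676 — 11 statements merged into one kernel-verified Lean document; each statement's English description precedes it below -/
import Mathlib

section
/- Let α, β, δ be positive real numbers and define Tr = 2 - 2α(β+δ) + α²βδ. Set m = min{2/β, 2/δ} and M = max{2/β, 2/δ}, and suppose β ≠ δ. Then |Tr| = 2 if and only if α ∈ {m, M, m+M}; |Tr| < 2 if and only if α ∈ (0,m) ∪ (M, m+M); and |Tr| > 2 if and only if α ∈ (m,M) ∪ (m+M, ∞). -/
/-!
Both `Tr - 2` and `Tr + 2` factor over the reals:
`Tr - 2 = αβδ (α - (2/β + 2/δ))` and `Tr + 2 = βδ (α - 2/β)(α - 2/δ)`.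
Since `{m, M} = {2/β, 2/δ}`, the sign of `Tr - 2` is that of `α - (m + M)` and the sign of
`Tr + 2` is that of `(α - m)(α - M)`, and `|Tr|` compares with `2` according to these two signs.
-/

open Set

theorem sub_min_mul_sub_max (x a b : ℝ) :
    (x - min a b) * (x - max a b) = (x - a) * (x - b) := by
  rcases le_total a b with h | h
  · rw [min_eq_left h, max_eq_right h]
  · rw [min_eq_right h, max_eq_left h, mul_comm]

section AbsCompareTwo

variable {t x m M a b : ℝ}

theorem abs_eq_two_iff_of_factor (ha : a ≠ 0) (hb : b ≠ 0)
    (hsub : t - 2 = a * (x - (m + M))) (hadd : t + 2 = b * ((x - m) * (x - M))) :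
    |t| = 2 ↔ x = m ∨ x = M ∨ x = m + M := by
  have hsub' : t = 2 ↔ x = m + M := by
    rw [← sub_eq_zero, hsub, mul_eq_zero, sub_eq_zero, or_iff_right ha]
  have hadd' : t = -2 ↔ x = m ∨ x = M := by
    rw [← add_neg_eq_zero, neg_neg, hadd, mul_eq_zero, or_iff_right hb, mul_eq_zero,
      sub_eq_zero, sub_eq_zero]
  rw [abs_eq zero_le_two, hsub', hadd']
  tauto

theorem abs_lt_two_iff_of_factor (hx : 0 < x) (hmM : m ≤ M) (ha : 0 < a)
    (hb : 0 < b) (hsub : t - 2 = a * (x - (m + M))) (hadd : t + 2 = b * ((x - m) * (x - M))) :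
    |t| < 2 ↔ x ∈ Ioo 0 m ∪ Ioo M (m + M) := by
  have hsub' : t < 2 ↔ x < m + M := by
    rw [← sub_neg, hsub, ← smul_eq_mul, smul_neg_iff_of_pos_left ha, sub_neg]
  have hadd' : -2 < t ↔ x < m ∨ M < x := by
    rw [neg_lt_iff_pos_add, hadd, mul_pos_iff_of_pos_left hb, sub_mul_sub_pos_iff x hmM]
  rw [abs_lt, hsub', hadd', mem_union, mem_Ioo, mem_Ioo]
  constructor
  · rintro ⟨h | h, hlt⟩
    · exact Or.inl ⟨hx, h⟩
    · exact Or.inr ⟨h, hlt⟩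
  · rintro (⟨-, h⟩ | ⟨h, hlt⟩)
    · exact ⟨Or.inl h, by linarith⟩
    · exact ⟨Or.inr h, hlt⟩

theorem two_lt_abs_iff_of_factor (hmM : m ≤ M) (ha : 0 < a) (hb : 0 < b)
    (hsub : t - 2 = a * (x - (m + M))) (hadd : t + 2 = b * ((x - m) * (x - M))) :
    2 < |t| ↔ x ∈ Ioo m M ∪ Ioi (m + M) := by
  have hsub' : 2 < t ↔ m + M < x := by
    rw [← sub_pos, hsub, mul_pos_iff_of_pos_left ha, sub_pos]
  have hadd' : t < -2 ↔ x ∈ Ioo m M := by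
    rw [lt_neg_iff_add_neg, hadd, ← smul_eq_mul, smul_neg_iff_of_pos_left hb,
      sub_mul_sub_neg_iff x hmM, mem_Ioo]
  rw [lt_abs, hsub', lt_neg, hadd', mem_union, mem_Ioi, or_comm]

end AbsCompareTwo

theorem trace_sub_two {α β δ : ℝ} (hβ : β ≠ 0) (hδ : δ ≠ 0) :
    (2 - 2 * α * (β + δ) + α ^ 2 * β * δ) - 2 = α * β * δ * (α - (2 / β + 2 / δ)) := by
  field_simp
  ring

theorem trace_add_two {α β δ : ℝ} (hβ : β ≠ 0) (hδ : δ ≠ 0) :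
    (2 - 2 * α * (β + δ) + α ^ 2 * β * δ) + 2 = β * δ * ((α - 2 / β) * (α - 2 / δ)) := by
  field_simp
  ring

theorem stmt_0_general (α β δ m M Tr : ℝ) (hα : 0 < α) (hβ : 0 < β) (hδ : 0 < δ)
    (hm : m = min (2 / β) (2 / δ)) (hM : M = max (2 / β) (2 / δ))
    (hTr : Tr = 2 - 2 * α * (β + δ) + α ^ 2 * β * δ) :
    (|Tr| = 2 ↔ α = m ∨ α = M ∨ α = m + M) ∧
    (|Tr| < 2 ↔ α ∈ Set.Ioo 0 m ∪ Set.Ioo M (m + M)) ∧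
    (2 < |Tr| ↔ α ∈ Set.Ioo m M ∪ Set.Ioi (m + M)) := by
  have hmM : m ≤ M := hm ▸ hM ▸ min_le_max
  have hsub : Tr - 2 = α * β * δ * (α - (m + M)) := by
    rw [hTr, hm, hM, min_add_max, trace_sub_two hβ.ne' hδ.ne']
  have hadd : Tr + 2 = β * δ * ((α - m) * (α - M)) := by
    rw [hTr, hm, hM, sub_min_mul_sub_max, trace_add_two hβ.ne' hδ.ne']
  have hαβδ : 0 < α * β * δ := by positivity
  have hβδ : 0 < β * δ := by positivity
  exact ⟨abs_eq_two_iff_of_factor hαβδ.ne' hβδ.ne' hsub hadd,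
    abs_lt_two_iff_of_factor hα hmM hαβδ hβδ hsub hadd,
    two_lt_abs_iff_of_factor hmM hαβδ hβδ hsub hadd⟩

theorem stmt_0 (α β δ m M Tr : ℝ) (hα : 0 < α) (hβ : 0 < β) (hδ : 0 < δ)
    (hne : β ≠ δ)
    (hm : m = min (2 / β) (2 / δ)) (hM : M = max (2 / β) (2 / δ))
    (hTr : Tr = 2 - 2 * α * (β + δ) + α ^ 2 * β * δ) :
    (|Tr| = 2 ↔ α = m ∨ α = M ∨ α = m + M) ∧
    (|Tr| < 2 ↔ α ∈ Set.Ioo 0 m ∪ Set.Ioo M (m + M)) ∧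
    (2 < |Tr| ↔ α ∈ Set.Ioo m M ∪ Set.Ioi (m + M)) :=
  stmt_0_general α β δ m M Tr hα hβ hδ hm hM hTr
end

section
/- Let α > 0, β > 0 and define Tr = 2 - 4αβ + α²β², i.e. the case δ = β in the trace formula, and set m = 2/β. Then |Tr| = 2 if and only if α = m or α = 2m; |Tr| < 2 if and only if α ∈ (0,m) ∪ (m,2m); and |Tr| > 2 if and only if α > 2m. -/
/-!
With `x = αβ` the trace is `Tr = x² - 4x + 2 = (x - 2)² - 2`, so `|Tr| < 2` exactly when
`0 < (x - 2)² < 4`, i.e. `x ∈ (0, 2) ∪ (2, 4)`, and `|Tr| = 2` exactly when `x ∈ {0, 2, 4}`.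
Since `β > 0`, the conditions on `x` become the stated ones on `α` after dividing by `β`.
-/

open Set

/-- `Tr S₂` in the case `β = δ`, as a function of `x = αβ`. -/
def symmTrace (x : ℝ) : ℝ := x ^ 2 - 4 * x + 2

lemma symmTrace_eq (x : ℝ) : symmTrace x = (x - 2) ^ 2 - 2 := by
  unfold symmTrace; ring

lemma abs_symmTrace_eq_two_iff (x : ℝ) : |symmTrace x| = 2 ↔ x = 0 ∨ x = 2 ∨ x = 4 := by
  have hsq : |symmTrace x| = 2 ↔ (x - 2) ^ 2 = 2 ^ 2 ∨ (x - 2) ^ 2 = 0 := by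
    rw [abs_eq zero_le_two, symmTrace_eq]
    constructor <;> rintro (h | h) <;> [left; right; left; right] <;> linarith
  rw [hsq, sq_eq_sq_iff_eq_or_eq_neg, pow_eq_zero_iff two_ne_zero]
  grind

lemma abs_symmTrace_lt_two_iff (x : ℝ) : |symmTrace x| < 2 ↔ x ∈ Ioo 0 2 ∪ Ioo 2 4 := by
  have hsq : |symmTrace x| < 2 ↔ 0 < (x - 2) ^ 2 ∧ (x - 2) ^ 2 < 2 ^ 2 := by
    rw [abs_lt, symmTrace_eq]; constructor <;> rintro ⟨h1, h2⟩ <;> constructor <;> linarith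
  rw [hsq, sq_pos_iff, sub_ne_zero, sq_lt_sq, abs_two, abs_lt]
  grind

lemma two_lt_abs_symmTrace_iff (x : ℝ) : 2 < |symmTrace x| ↔ x < 0 ∨ 4 < x := by
  have hsq : 2 < |symmTrace x| ↔ 2 ^ 2 < (x - 2) ^ 2 := by
    rw [lt_abs, symmTrace_eq]; constructor
    · rintro (h | h) <;> nlinarith [sq_nonneg (x - 2)]
    · intro h; left; linarith
  rw [hsq, sq_lt_sq, abs_two, lt_abs]
  grind

theorem stmt_1 (α β m Tr : ℝ) (hα : 0 < α) (hβ : 0 < β)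
    (hm : m = 2 / β)
    (hTr : Tr = 2 - 4 * α * β + α ^ 2 * β ^ 2) :
    (|Tr| = 2 ↔ α = m ∨ α = 2 * m) ∧
    (|Tr| < 2 ↔ α ∈ Set.Ioo 0 m ∪ Set.Ioo m (2 * m)) ∧
    (2 < |Tr| ↔ 2 * m < α) := by
  have hTr_symm : Tr = symmTrace (α * β) := by rw [hTr, symmTrace]; ring
  have hx : 0 < α * β := mul_pos hα hβ
  have h2m : 2 * m = 4 / β := by rw [hm]; ring
  rw [hTr_symm, h2m, hm, abs_symmTrace_eq_two_iff, abs_symmTrace_lt_two_iff, two_lt_abs_symmTrace_iff]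
  simp only [mem_union, mem_Ioo, eq_div_iff hβ.ne', lt_div_iff₀ hβ, div_lt_iff₀ hβ]
  grind
end

section
/- Let β > 0 and δ ≤ 0 with 2/β + 2/δ ≤ 0 (interpreting the condition as automatically holding when δ = 0). Then for α > 0, the quantity Tr = 2 - 2α(β+δ) + α²βδ satisfies |Tr| = 2 iff α = 2/β, |Tr| < 2 iff 0 < α < 2/β, and |Tr| > 2 iff α > 2/β. -/
/-!
Writing `Tr = 2 - 2α(β + δ) + α²βδ`, one has `Tr + 2 = (2 - αβ)(2 - αδ)` and
`Tr - 2 = -2α(β + δ) + α²βδ`. The hypothesis on `2/β + 2/δ` says `β + δ ≥ 0`, so `Tr < 2`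
for every `α > 0`; hence `|Tr|` compares with `2` as `-Tr` does, i.e. as `Tr + 2` compares
with `0`. Since `δ ≤ 0` the factor `2 - αδ` is positive, so this is the sign of `2 - αβ`.
-/

/-- The trace `Tr` of the linearised return map of the 2-periodic orbit. -/
def monodromyTrace (α β δ : ℝ) : ℝ := 2 - 2 * α * (β + δ) + α ^ 2 * β * δ

lemma add_nonneg_of_div_add_div_nonpos {c β δ : ℝ} (hc : 0 < c) (hβ : 0 < β) (hδ : δ < 0)
    (h : c / β + c / δ ≤ 0) : 0 ≤ β + δ := by
  have hβδ : β * δ < 0 := mul_neg_of_pos_of_neg hβ hδ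
  have key : c / β + c / δ = c * (β + δ) / (β * δ) := by
    rw [div_add_div _ _ hβ.ne' hδ.ne]; ring
  rw [key, div_le_iff_of_neg hβδ, zero_mul, mul_nonneg_iff_of_pos_left hc] at h
  exact h

lemma monodromyTrace_add_two (α β δ : ℝ) :
    monodromyTrace α β δ + 2 = (2 - α * β) * (2 - α * δ) := by
  unfold monodromyTrace; ring

lemma monodromyTrace_lt_two {α β δ : ℝ} (hα : 0 < α) (hβ : 0 < β) (hδ : δ ≤ 0)
    (hβδ : 0 ≤ β + δ) : monodromyTrace α β δ < 2 := by
  unfold monodromyTrace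
  rcases hδ.lt_or_eq with hδ | rfl
  · have hprod : α ^ 2 * β * δ < 0 := mul_neg_of_pos_of_neg (by positivity) hδ
    linarith [mul_nonneg hα.le hβδ]
  · linarith [mul_pos hα hβ]

lemma monodromyTrace_eq_neg_two_iff {α β δ : ℝ} (hfac : 0 < 2 - α * δ) :
    monodromyTrace α β δ = -2 ↔ α * β = 2 := by
  rw [← add_eq_zero_iff_eq_neg, monodromyTrace_add_two, mul_eq_zero, sub_eq_zero,
    or_iff_left hfac.ne', eq_comm]

lemma neg_two_lt_monodromyTrace_iff {α β δ : ℝ} (hfac : 0 < 2 - α * δ) :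
    -2 < monodromyTrace α β δ ↔ α * β < 2 := by
  rw [← sub_pos, sub_neg_eq_add, monodromyTrace_add_two, mul_pos_iff_of_pos_right hfac, sub_pos]

lemma monodromyTrace_lt_neg_two_iff {α β δ : ℝ} (hfac : 0 < 2 - α * δ) :
    monodromyTrace α β δ < -2 ↔ 2 < α * β := by
  rw [← not_le, ← sub_nonneg, sub_neg_eq_add, monodromyTrace_add_two,
    mul_nonneg_iff_of_pos_right hfac, sub_nonneg, not_le]

lemma abs_eq_iff_eq_neg_of_lt {x c : ℝ} (hx : x < c) : |x| = c ↔ x = -c := by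
  constructor
  · intro h
    exact ((abs_eq ((abs_nonneg x).trans_eq h)).mp h).resolve_left hx.ne
  · rintro rfl
    exact abs_neg c ▸ abs_of_pos (by linarith)

theorem stmt_3 (β δ : ℝ) (hβ : 0 < β) (hδ : δ ≤ 0)
    (h : δ = 0 ∨ 2 / β + 2 / δ ≤ 0) :
    ∀ α : ℝ, 0 < α →
      (|2 - 2 * α * (β + δ) + α ^ 2 * β * δ| = 2 ↔ α = 2 / β) ∧
      (|2 - 2 * α * (β + δ) + α ^ 2 * β * δ| < 2 ↔ α < 2 / β) ∧
      (2 < |2 - 2 * α * (β + δ) + α ^ 2 * β * δ| ↔ 2 / β < α) := by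
  intro α hα
  have hβδ : 0 ≤ β + δ := by
    rcases hδ.lt_or_eq with hδ' | rfl
    · exact add_nonneg_of_div_add_div_nonpos two_pos hβ hδ' (h.resolve_left hδ'.ne)
    · simpa using hβ.le
  have hlt : monodromyTrace α β δ < 2 := monodromyTrace_lt_two hα hβ hδ hβδ
  have hfac : 0 < 2 - α * δ := by nlinarith
  change (|monodromyTrace α β δ| = 2 ↔ _) ∧ (|monodromyTrace α β δ| < 2 ↔ _) ∧
    (2 < |monodromyTrace α β δ| ↔ _)
  refine ⟨?_, ?_, ?_⟩
  · rw [abs_eq_iff_eq_neg_of_lt hlt, monodromyTrace_eq_neg_two_iff hfac, eq_div_iff hβ.ne']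
  · rw [abs_lt, and_iff_left hlt, neg_two_lt_monodromyTrace_iff hfac, lt_div_iff₀ hβ]
  · rw [lt_abs, or_iff_right hlt.not_gt, lt_neg, monodromyTrace_lt_neg_two_iff hfac,
      div_lt_iff₀ hβ]
end

section
/- Let β > 0, δ < 0 with 2/β + 2/δ > 0, and let Tr = 2 - 2α(β+δ) + α²βδ for α > 0. Then |Tr| = 2 iff α = 2/β or α = 2/β + 2/δ; |Tr| < 2 iff α ∈ (2/β + 2/δ, 2/β); and |Tr| > 2 iff α ∈ (0, 2/β + 2/δ) ∪ (2/β, ∞). -/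
/-!
Both `Tr - 2` and `Tr + 2` factor, with a positive factor and a linear one:
`Tr - 2 = (-βδα) (2/β + 2/δ - α)` and `Tr + 2 = β (2 - δα) (2/β - α)`.
Since `β > 0 > δ` and `α > 0`, the signs of `Tr - 2` and `Tr + 2` are those of
`2/β + 2/δ - α` and `2/β - α`, which decides how `|Tr|` compares with `2`.
-/

theorem cmp_eq_cmp_of_sub_eq_pos_mul {R : Type*} [Ring R] [LinearOrder R] [IsStrictOrderedRing R]
    {x k y z c : R} (hc : 0 < c) (h : x - k = c * (y - z)) : cmp x k = cmp y z := by
  rw [← cmp_sub_zero, h, ← mul_zero c, cmp_mul_pos_left hc, cmp_sub_zero]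

section Trace

variable {β δ α : ℝ}

theorem cmp_trace_two (hβ : 0 < β) (hδ : δ < 0) (hα : 0 < α) :
    cmp (2 - 2 * α * (β + δ) + α ^ 2 * β * δ) 2 = cmp (2 / β + 2 / δ) α := by
  refine cmp_eq_cmp_of_sub_eq_pos_mul (c := α * β * -δ)
    (mul_pos (mul_pos hα hβ) (neg_pos.2 hδ)) ?_
  field_simp [hβ.ne', hδ.ne]
  ring

theorem cmp_trace_neg_two (hβ : 0 < β) (hδ : δ < 0) (hα : 0 < α) :
    cmp (2 - 2 * α * (β + δ) + α ^ 2 * β * δ) (-2) = cmp (2 / β) α := by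
  refine cmp_eq_cmp_of_sub_eq_pos_mul (c := β * (2 - δ * α))
    (mul_pos hβ (by nlinarith)) ?_
  field_simp [hβ.ne', hδ.ne]
  ring

end Trace

theorem stmt_4_general (β δ : ℝ) (hβ : 0 < β) (hδ : δ < 0) :
    ∀ α : ℝ, 0 < α →
      (|2 - 2 * α * (β + δ) + α ^ 2 * β * δ| = 2 ↔
        α = 2 / β ∨ α = 2 / β + 2 / δ) ∧
      (|2 - 2 * α * (β + δ) + α ^ 2 * β * δ| < 2 ↔
        α ∈ Set.Ioo (2 / β + 2 / δ) (2 / β)) ∧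
      (2 < |2 - 2 * α * (β + δ) + α ^ 2 * β * δ| ↔
        α ∈ Set.Ioo 0 (2 / β + 2 / δ) ∪ Set.Ioi (2 / β)) := by
  intro α hα
  have hcmp_two := cmp_trace_two hβ hδ hα
  have hcmp_neg_two := cmp_trace_neg_two hβ hδ hα
  simp only [abs_eq (zero_le_two : (0 : ℝ) ≤ 2), abs_lt, lt_abs, lt_neg, Set.mem_Ioo,
    Set.mem_union, Set.mem_Ioi]
  grind [cmp_eq_eq_iff, cmp_eq_lt_iff, cmp_eq_gt_iff]

theorem stmt_4 (β δ : ℝ) (hβ : 0 < β) (hδ : δ < 0)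
    (h : 0 < 2 / β + 2 / δ) :
    ∀ α : ℝ, 0 < α →
      (|2 - 2 * α * (β + δ) + α ^ 2 * β * δ| = 2 ↔
        α = 2 / β ∨ α = 2 / β + 2 / δ) ∧
      (|2 - 2 * α * (β + δ) + α ^ 2 * β * δ| < 2 ↔
        α ∈ Set.Ioo (2 / β + 2 / δ) (2 / β)) ∧
      (2 < |2 - 2 * α * (β + δ) + α ^ 2 * β * δ| ↔
        α ∈ Set.Ioo 0 (2 / β + 2 / δ) ∪ Set.Ioi (2 / β)) :=
  stmt_4_general β δ hβ hδ
end

section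
/- In the circle of radius R with Larmor radius 0 < μ < R, the symmetric 2-periodic inverse magnetic billiard trajectory has α = 2m where m = 2/β (with all four angles θᵢ equal, β = δ = 2 cot θ₀). Concretely, if cos θ₀ = μ/R and ℓ₁ = 2√(R² − μ²), then ℓ₁/μ = 2 tan θ₀, and consequently Tr S₂ = 2 - 4αβ + α²β² = 2, so the trajectory is parabolic. -/
/-! From cos θ₀ = μ/R one gets tan θ₀ = √(R² − μ²)/μ, so α = 2 tan θ₀ and β = 2 / tan θ₀.
Hence αβ = 4 and Tr S₂ = 2 − 4·4 + 4² = 2. -/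

open Real

theorem Real.sin_eq_sqrt_sq_sub_sq_div {θ R μ : ℝ} (h0 : 0 ≤ θ) (hπ : θ ≤ π) (hR : 0 < R)
    (hcos : cos θ = μ / R) : sin θ = √(R ^ 2 - μ ^ 2) / R := by
  have h_one_sub : 1 - (μ / R) ^ 2 = (R ^ 2 - μ ^ 2) / R ^ 2 := by field_simp
  rw [sin_eq_sqrt_one_sub_cos_sq h0 hπ, hcos, h_one_sub, sqrt_div' _ (sq_nonneg R),
    sqrt_sq hR.le]

theorem Real.tan_eq_sqrt_sq_sub_sq_div {θ R μ : ℝ} (h0 : 0 ≤ θ) (hπ : θ ≤ π) (hR : 0 < R)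
    (hcos : cos θ = μ / R) : tan θ = √(R ^ 2 - μ ^ 2) / μ := by
  rw [tan_eq_sin_div_cos, sin_eq_sqrt_sq_sub_sq_div h0 hπ hR hcos, hcos,
    div_div_div_cancel_right₀ hR.ne']

theorem stmt_6_general (R μ θ₀ ℓ₁ α β : ℝ) (hμ : 0 < μ)
    (hθ : θ₀ ∈ Set.Ioo 0 (π / 2))
    (hcos : Real.cos θ₀ = μ / R)
    (hℓ : ℓ₁ = 2 * Real.sqrt (R ^ 2 - μ ^ 2))
    (hα : α = ℓ₁ / μ) (hβ : β = 2 * (Real.cos θ₀ / Real.sin θ₀)) :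
    ℓ₁ / μ = 2 * Real.tan θ₀ ∧ α = 2 * (2 / β) ∧
    2 - 4 * α * β + α ^ 2 * β ^ 2 = 2 := by
  obtain ⟨h0, hπ2⟩ := hθ
  have hR : 0 < R := by
    have hcos_pos : 0 < μ / R := hcos ▸ cos_pos_of_mem_Ioo ⟨by linarith [pi_pos], hπ2⟩
    exact (div_pos_iff_of_pos_left hμ).mp hcos_pos
  have hℓ_tan : ℓ₁ / μ = 2 * tan θ₀ := by
    rw [hℓ, tan_eq_sqrt_sq_sub_sq_div h0.le (by linarith [pi_pos]) hR hcos, mul_div_assoc]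
  have hβ_tan : β = 2 / tan θ₀ := by
    rw [hβ, tan_eq_sin_div_cos, div_div_eq_mul_div, mul_div_assoc]
  have htan_ne : tan θ₀ ≠ 0 := (tan_pos_of_pos_of_lt_pi_div_two h0 hπ2).ne'
  have hαβ : α * β = 4 := by
    rw [hα, hℓ_tan, hβ_tan]
    field_simp
    ring
  refine ⟨hℓ_tan, ?_, ?_⟩
  · rw [hα, hℓ_tan, hβ_tan]
    field_simp
  · linear_combination (α * β) * hαβ

theorem stmt_6 (R μ θ₀ ℓ₁ α β : ℝ) (hμ : 0 < μ) (hμR : μ < R)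
    (hθ : θ₀ ∈ Set.Ioo 0 (π / 2))
    (hcos : Real.cos θ₀ = μ / R)
    (hℓ : ℓ₁ = 2 * Real.sqrt (R ^ 2 - μ ^ 2))
    (hα : α = ℓ₁ / μ) (hβ : β = 2 * (Real.cos θ₀ / Real.sin θ₀)) :
    ℓ₁ / μ = 2 * Real.tan θ₀ ∧ α = 2 * (2 / β) ∧
    2 - 4 * α * β + α ^ 2 * β ^ 2 = 2 :=
  stmt_6_general R μ θ₀ ℓ₁ α β hμ hθ hcos hℓ hα hβ
end

section
/- For the ellipse x²/a² + y²/b² = 1 with a > b > 0 and Larmor radius 0 < μ < b, define α = (2a√(b² − μ²))/(bμ) and β = (2aμ)/(b√(b² − μ²)). Then α·β = 4a²/b², i.e. α = (a²/b²)·(4/β), and since a > b, α > 2·(2/β); hence Tr = 2 - 4αβ + α²β² > 2. -/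
/-! The product αβ does not depend on μ: the factors `√(b² - μ²)` and `μ` cancel, leaving
`αβ = 4a²/b² > 4` because `a > b`. The trace `2 - 4αβ + (αβ)² = 2 + αβ(αβ - 4)` is then larger
than `2`, and `α = (a²/b²)(4/β)` with `a²/b² > 1` gives `α > 4/β`. -/

lemma div_mul_div_cancel_eq (a b μ s : ℝ) (hb : b ≠ 0) (hμ : μ ≠ 0) (hs : s ≠ 0) :
    2 * a * s / (b * μ) * (2 * a * μ / (b * s)) = 4 * a ^ 2 / b ^ 2 := by
  field_simp
  ring

lemma two_lt_two_sub_four_mul_add_sq {x : ℝ} (hx : 4 < x) : 2 < 2 - 4 * x + x ^ 2 := by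
  nlinarith

lemma one_lt_sq_div_sq {a b : ℝ} (hb : 0 < b) (hab : b < a) : 1 < a ^ 2 / b ^ 2 := by
  rw [one_lt_div (by positivity)]
  exact pow_lt_pow_left₀ hab hb.le two_ne_zero

theorem stmt_7 (a b μ α β : ℝ) (hb : 0 < b) (hab : b < a)
    (hμ : 0 < μ) (hμb : μ < b)
    (hα : α = 2 * a * Real.sqrt (b ^ 2 - μ ^ 2) / (b * μ))
    (hβ : β = 2 * a * μ / (b * Real.sqrt (b ^ 2 - μ ^ 2))) :
    α * β = 4 * a ^ 2 / b ^ 2 ∧ α = a ^ 2 / b ^ 2 * (4 / β) ∧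
    2 * (2 / β) < α ∧
    2 < 2 - 4 * α * β + α ^ 2 * β ^ 2 := by
  have hs : 0 < Real.sqrt (b ^ 2 - μ ^ 2) := Real.sqrt_pos.mpr (by nlinarith)
  have hβ_pos : 0 < β := by rw [hβ]; have := hb.trans hab; positivity
  have hab_sq := one_lt_sq_div_sq hb hab
  have hprod : α * β = 4 * a ^ 2 / b ^ 2 := by
    rw [hα, hβ]
    exact div_mul_div_cancel_eq a b μ _ hb.ne' hμ.ne' hs.ne'
  have hα_eq : α = a ^ 2 / b ^ 2 * (4 / β) := by
    rw [← eq_div_iff hβ_pos.ne'] at hprod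
    rw [hprod]; ring
  have hprod_gt : 4 < α * β := by rw [hprod, mul_div_assoc]; linarith
  refine ⟨hprod, hα_eq, ?_, ?_⟩
  · calc 2 * (2 / β) = 1 * (4 / β) := by ring
      _ < a ^ 2 / b ^ 2 * (4 / β) := by gcongr
      _ = α := hα_eq.symm
  · have := two_lt_two_sub_four_mul_add_sq hprod_gt
    linarith [mul_pow α β 2]
end

section
/- For the ellipse x²/a² + y²/b² = 1 with a > b > 0 and Larmor radius 0 < μ < a, the minor-axis-aligned 2-periodic trajectory has α = (b²/a²)·(4/β) with β > 0, where α = (2b√(a² − μ²))/(aμ) and β = (2bμ)/(a√(a² − μ²)). Consequently Tr = 2 - 4αβ + α²β² satisfies |Tr| < 2 if and only if a² ≠ 2b², and |Tr| = 2 if and only if a² = 2b². -/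
/-!
The product `αβ` equals `t = 4b²/a²`, independent of `μ`, and `0 < b < a` gives `0 < t < 4`.
The trace is `2 - 4t + t² = (t - 2)² - 2`, which for `0 < t < 4` lies in `[-2, 2)` and reaches
`-2` exactly at `t = 2`, i.e. at `a² = 2b²`.
-/

lemma abs_two_sub_four_mul_add_sq_lt_two_iff {t : ℝ} (h0 : 0 < t) (h4 : t < 4) :
    |2 - 4 * t + t ^ 2| < 2 ↔ t ≠ 2 := by
  constructor
  · rintro h rfl
    norm_num at h
  · intro h
    have : 0 < (t - 2) ^ 2 := by have := sub_ne_zero.mpr h; positivity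
    rw [abs_lt]
    constructor <;> nlinarith

lemma abs_two_sub_four_mul_add_sq_eq_two_iff {t : ℝ} (h0 : 0 < t) (h4 : t < 4) :
    |2 - 4 * t + t ^ 2| = 2 ↔ t = 2 := by
  rw [abs_eq zero_le_two]
  constructor
  · rintro (h | h)
    · nlinarith
    · nlinarith [sq_nonneg (t - 2)]
  · rintro rfl
    norm_num

lemma mul_div_mul_div_eq {a b μ s : ℝ} (ha : a ≠ 0) (hμ : μ ≠ 0) (hs : s ≠ 0) :
    2 * b * s / (a * μ) * (2 * b * μ / (a * s)) = 4 * b ^ 2 / a ^ 2 := by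
  field_simp
  ring

lemma four_mul_sq_div_sq_mem_Ioo {a b : ℝ} (hb : 0 < b) (hab : b < a) :
    4 * b ^ 2 / a ^ 2 ∈ Set.Ioo 0 4 := by
  have ha : 0 < a := hb.trans hab
  refine ⟨by positivity, ?_⟩
  rw [div_lt_iff₀ (by positivity)]
  nlinarith

lemma four_mul_sq_div_sq_eq_two_iff {a b : ℝ} (ha : a ≠ 0) :
    4 * b ^ 2 / a ^ 2 = 2 ↔ a ^ 2 = 2 * b ^ 2 := by
  rw [div_eq_iff (pow_ne_zero 2 ha)]
  constructor <;> intro h <;> linarith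

theorem stmt_8 (a b μ α β : ℝ) (hb : 0 < b) (hab : b < a)
    (hμ : 0 < μ) (hμa : μ < a)
    (hα : α = 2 * b * Real.sqrt (a ^ 2 - μ ^ 2) / (a * μ))
    (hβ : β = 2 * b * μ / (a * Real.sqrt (a ^ 2 - μ ^ 2))) :
    α = b ^ 2 / a ^ 2 * (4 / β) ∧ 0 < β ∧
    (|2 - 4 * α * β + α ^ 2 * β ^ 2| < 2 ↔ a ^ 2 ≠ 2 * b ^ 2) ∧
    (|2 - 4 * α * β + α ^ 2 * β ^ 2| = 2 ↔ a ^ 2 = 2 * b ^ 2) := by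
  have ha : 0 < a := hb.trans hab
  have hs : 0 < Real.sqrt (a ^ 2 - μ ^ 2) := Real.sqrt_pos.mpr (by nlinarith)
  have hβ0 : 0 < β := by rw [hβ]; positivity
  have hαβ : α * β = 4 * b ^ 2 / a ^ 2 := by
    rw [hα, hβ]; exact mul_div_mul_div_eq ha.ne' hμ.ne' hs.ne'
  have htr : 2 - 4 * α * β + α ^ 2 * β ^ 2 = 2 - 4 * (α * β) + (α * β) ^ 2 := by ring
  obtain ⟨ht0, ht4⟩ := four_mul_sq_div_sq_mem_Ioo hb hab
  refine ⟨?_, hβ0, ?_, ?_⟩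
  · rw [mul_div_assoc', ← mul_div_right_comm, eq_div_iff hβ0.ne', hαβ]
    ring
  · rw [htr, hαβ, abs_two_sub_four_mul_add_sq_lt_two_iff ht0 ht4, ne_eq, ne_eq,
      four_mul_sq_div_sq_eq_two_iff ha.ne']
  · rw [htr, hαβ, abs_two_sub_four_mul_add_sq_eq_two_iff ht0 ht4,
      four_mul_sq_div_sq_eq_two_iff ha.ne']
end

section
/- Let k ≥ 2 be an integer, α = 2(1 − μ^{2k})^{1/(2k)}/μ and β = 2(μ^{−2k} − 1)^{(1−2k)/(2k)} for 0 < μ < 1, and m = 2/β. Then α = m if and only if μ = (2^{k/(k−1)} + 1)^{−1/(2k)}, and α = 2m if and only if μ = 2^{−1/(2k)}. -/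
/-!
Put `s = μ^{-2k} - 1`. Then `α = 2 s^{1/(2k)}` and `m = s^{(2k-1)/(2k)}`, so `α = c m` amounts to
`s^{(k-1)/k} = 2 / c`, i.e. `s = (2 / c)^{k/(k-1)}`. For `c = 1` this gives `s = 2^{k/(k-1)}`, for
`c = 2` it gives `s = 1`, and `μ = (s + 1)^{-1/(2k)}` in both cases.
-/

open Real

lemma one_sub_pow_rpow_div_eq_inv_pow_sub_one_rpow {μ : ℝ} {n : ℕ} (hμ : 0 < μ) (hμ1 : μ ≤ 1)
    (hn : n ≠ 0) :
    (1 - μ ^ n) ^ ((1 : ℝ) / n) / μ = ((μ ^ n)⁻¹ - 1) ^ ((1 : ℝ) / n) := by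
  have hμn : 0 < μ ^ n := pow_pos hμ n
  rw [show (μ ^ n)⁻¹ - 1 = (1 - μ ^ n) / μ ^ n by field_simp,
    div_rpow (sub_nonneg.2 (pow_le_one₀ hμ.le hμ1)) hμn.le, one_div,
    pow_rpow_inv_natCast hμ.le hn]

lemma inv_pow_sub_one_eq_iff {μ C : ℝ} {n : ℕ} (hμ : 0 < μ) (hn : n ≠ 0) (hC : -1 < C) :
    (μ ^ n)⁻¹ - 1 = C ↔ μ = (C + 1) ^ (-1 / (n : ℝ)) := by
  have hn' : -(n : ℝ) ≠ 0 := neg_ne_zero.2 (Nat.cast_ne_zero.2 hn)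
  rw [sub_eq_iff_eq_add, ← rpow_natCast, ← rpow_neg hμ.le, div_eq_mul_inv, neg_one_mul, ← inv_neg,
    eq_rpow_inv hμ.le (by linarith) hn']

lemma two_mul_rpow_eq_mul_rpow_iff {s c k : ℝ} (hs : 0 < s) (hc : 0 < c) (hk : 1 < k) :
    2 * s ^ (1 / (2 * k)) = c * s ^ ((2 * k - 1) / (2 * k)) ↔ s = (2 / c) ^ (k / (k - 1)) := by
  have hk0 : k ≠ 0 := by positivity
  have hexp : (2 * k - 1) / (2 * k) = 1 / (2 * k) + (k - 1) / k := by field_simp; ring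
  have hu : 0 < s ^ (1 / (2 * k)) := rpow_pos_of_pos hs _
  rw [hexp, rpow_add hs, mul_left_comm, mul_comm (2 : ℝ), mul_right_inj' hu.ne',
    ← inv_div (k - 1) k, eq_rpow_inv hs.le (by positivity) (div_ne_zero (by linarith) hk0),
    eq_comm, eq_div_iff hc.ne', mul_comm]

theorem stmt_10 (k : ℕ) (hk : 2 ≤ k) (μ α β m : ℝ) (hμ : 0 < μ) (hμ1 : μ < 1)
    (hα : α = 2 * (1 - μ ^ (2 * k)) ^ ((1 : ℝ) / (2 * k)) / μ)
    (hβ : β = 2 * ((μ ^ (2 * k))⁻¹ - 1) ^ ((1 - 2 * (k : ℝ)) / (2 * k)))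
    (hm : m = 2 / β) :
    (α = m ↔ μ = ((2 : ℝ) ^ ((k : ℝ) / (k - 1)) + 1) ^ (-(1 : ℝ) / (2 * k))) ∧
    (α = 2 * m ↔ μ = (2 : ℝ) ^ (-(1 : ℝ) / (2 * k))) := by
  have hn : 2 * k ≠ 0 := by omega
  have hk1 : (1 : ℝ) < k := by exact_mod_cast hk
  have hcast : ((2 * k : ℕ) : ℝ) = 2 * k := by push_cast; ring
  set s := (μ ^ (2 * k))⁻¹ - 1 with hs_def
  have hs : 0 < s := sub_pos.2 (one_lt_inv₀ (pow_pos hμ _) |>.2 (pow_lt_one₀ hμ.le hμ1 hn))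
  have hα' : α = 2 * s ^ (1 / (2 * k : ℝ)) := by
    rw [hα, mul_div_assoc, ← hcast, one_sub_pow_rpow_div_eq_inv_pow_sub_one_rpow hμ hμ1.le hn]
  have hm' : m = s ^ ((2 * k - 1) / (2 * k : ℝ)) := by
    rw [hm, hβ, div_mul_cancel_left₀ two_ne_zero, ← rpow_neg hs.le, ← neg_div, neg_sub]
  have hμ_iff (C : ℝ) (hC : 0 < C) : s = C ↔ μ = (C + 1) ^ (-(1 : ℝ) / (2 * k)) := by
    rw [hs_def, ← hcast]
    exact inv_pow_sub_one_eq_iff hμ hn (by linarith)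
  constructor
  · rw [hα', hm', ← one_mul (s ^ ((2 * k - 1) / (2 * k : ℝ))),
      two_mul_rpow_eq_mul_rpow_iff hs one_pos hk1, div_one,
      hμ_iff _ (by positivity)]
  · rw [hα', hm', two_mul_rpow_eq_mul_rpow_iff hs two_pos hk1, div_self two_ne_zero, one_rpow,
      hμ_iff 1 one_pos, one_add_one_eq_two]
end

section
/- Let k ≥ 2 be an integer. For x, y > 0 with y > x (extended appropriately to x ∈ (−2^{−1/(2k)}, 2^{−1/(2k)}) with y = (1 − x^{2k})^{1/(2k)}), define f_k(x,y) = (Σ_{j=0}^{2k−2} y^{2k−2−j} x^{j}) / (Σ_{j=0}^{2k−2} (−1)^j y^{2k−2−j} x^{j}). Then along the curve y = (1 − x^{2k})^{1/(2k)}, the function x ↦ f_k(x, y(x)) is continuous and strictly monotone increasing on (−2^{−1/(2k)}, 2^{−1/(2k)}), satisfies f_k(0,1) = 1, and has limits 1/(2k−1) as x → −2^{−1/(2k)} and 2k−1 as x → 2^{−1/(2k)}. -/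
/-!
With `t = x / y` and `n = 2k - 1`, homogeneity gives `f_k(x, y) = P(t) / P(-t)` where
`P(t) = ∑_{j<n} t^j`. On the curve, `|x| < y` and `y` decreases in `|x|`, so `t` increases
strictly from `-1` to `1` as `x` runs over `(-c, c)`. For `|t| < 1` the closed form
`P(t) / P(-t) = (1 + t)(1 - t^n) / ((1 - t)(1 + t^n))` has derivative with numerator
`2 (1 - t²) (∑_{i<n} t^{2i} - n t^{n-1})`, which is positive by AM-GM applied to the pairs
`t^{2i}, t^{2(n-1-i)}`. Since `n` is odd, `P` has no real zeros, so `P(t) / P(-t)` is continuous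
up to `t = ±1`, where it equals `n^{±1}`.
-/

open Real Filter Finset Set Topology

section geomSum

variable {R : Type*}

theorem geom_sum_range_add_two [CommSemiring R] (u : R) (n : ℕ) :
    ∑ i ∈ range (n + 2), u ^ i = 1 + u * ∑ i ∈ range n, u ^ i + u ^ (n + 1) := by
  rw [sum_range_succ, sum_range_succ', mul_sum]
  simp only [pow_succ']
  ring

theorem geom_sum_range_two_mul_add_three [CommSemiring R] (u : R) (m : ℕ) :
    ∑ i ∈ range (2 * (m + 1) + 1), u ^ i =
      u * ∑ i ∈ range (2 * m + 1), u ^ i + (1 + u ^ (2 * (m + 1))) := by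
  rw [show 2 * (m + 1) + 1 = 2 * m + 1 + 2 by ring, geom_sum_range_add_two]
  ring

variable [CommRing R] [LinearOrder R] [IsStrictOrderedRing R]

theorem two_mul_pow_le_one_add_pow (u : R) (m : ℕ) : 2 * u ^ m ≤ 1 + u ^ (2 * m) := by
  nlinarith [sq_nonneg (1 - u ^ m), pow_mul' u 2 m]

theorem two_mul_pow_lt_one_add_pow {u : R} (hu0 : 0 ≤ u) (hu1 : u < 1) {m : ℕ} (hm : m ≠ 0) :
    2 * u ^ m < 1 + u ^ (2 * m) := by
  have : u ^ m < 1 := pow_lt_one₀ hu0 hu1 hm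
  nlinarith [pow_mul' u 2 m]

theorem mul_pow_le_geom_sum {u : R} (hu : 0 ≤ u) (m : ℕ) :
    (2 * m + 1) * u ^ m ≤ ∑ i ∈ range (2 * m + 1), u ^ i := by
  induction m with
  | zero => simp
  | succ m ih =>
    calc (2 * (m + 1 : ℕ) + 1) * u ^ (m + 1) = u * ((2 * m + 1) * u ^ m) + 2 * u ^ (m + 1) := by
          push_cast; ring
      _ ≤ u * ∑ i ∈ range (2 * m + 1), u ^ i + (1 + u ^ (2 * (m + 1))) :=
          add_le_add (mul_le_mul_of_nonneg_left ih hu) (two_mul_pow_le_one_add_pow u _)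
      _ = _ := (geom_sum_range_two_mul_add_three u m).symm

theorem mul_pow_lt_geom_sum {u : R} (hu0 : 0 ≤ u) (hu1 : u < 1) {m : ℕ} (hm : m ≠ 0) :
    (2 * m + 1) * u ^ m < ∑ i ∈ range (2 * m + 1), u ^ i := by
  obtain ⟨m, rfl⟩ := Nat.exists_eq_succ_of_ne_zero hm
  calc (2 * (m + 1 : ℕ) + 1) * u ^ (m + 1) = u * ((2 * m + 1) * u ^ m) + 2 * u ^ (m + 1) := by
        push_cast; ring
    _ < u * ∑ i ∈ range (2 * m + 1), u ^ i + (1 + u ^ (2 * (m + 1))) :=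
        add_lt_add_of_le_of_lt (mul_le_mul_of_nonneg_left (mul_pow_le_geom_sum hu0 m) hu0)
          (two_mul_pow_lt_one_add_pow hu0 hu1 m.succ_ne_zero)
    _ = _ := (geom_sum_range_two_mul_add_three u m).symm

end geomSum

noncomputable def geomRatio (n : ℕ) (s : ℝ) : ℝ :=
  (∑ i ∈ range n, s ^ i) / ∑ i ∈ range n, (-s) ^ i

section geomRatio

variable {n : ℕ}

theorem continuous_geomRatio (hn : Odd n) : Continuous (geomRatio n) :=
  Continuous.div (by fun_prop) (by fun_prop) fun _ => hn.geom_sum_pos.ne'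

theorem geomRatio_zero (hn : Odd n) : geomRatio n 0 = 1 := by
  rw [geomRatio, neg_zero, div_self hn.geom_sum_pos.ne']

theorem geomRatio_one (hn : Odd n) : geomRatio n 1 = n := by
  simp [geomRatio, neg_one_geom_sum, Nat.not_even_iff_odd.mpr hn]

theorem geomRatio_neg_one (hn : Odd n) : geomRatio n (-1) = 1 / n := by
  simp [geomRatio, neg_one_geom_sum, Nat.not_even_iff_odd.mpr hn]

theorem geomRatio_eq_of_abs_lt (hn : Odd n) {s : ℝ} (hs : |s| < 1) :
    geomRatio n s = (1 + s) * (1 - s ^ n) / ((1 - s) * (1 + s ^ n)) := by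
  have h1 : s ≠ 1 := fun h => by simp [h] at hs
  have h2 : -s ≠ 1 := fun h => by simp [neg_eq_iff_eq_neg.mp h] at hs
  rw [geomRatio, geom_sum_eq h1, geom_sum_eq h2, hn.neg_pow, div_div_div_eq]
  congr 1 <;> ring

theorem strictMonoOn_geomRatio (hn : Odd n) (hn1 : 1 < n) :
    StrictMonoOn (geomRatio n) (Ioo (-1) 1) := by
  obtain ⟨m, rfl⟩ := hn
  set R : ℝ → ℝ := fun s => (1 + s) * (1 - s ^ (2 * m + 1)) / ((1 - s) * (1 + s ^ (2 * m + 1)))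
  have hden : ∀ s ∈ Ioo (-1 : ℝ) 1, 0 < (1 - s) * (1 + s ^ (2 * m + 1)) := by
    intro s hs
    have : |s ^ (2 * m + 1)| < 1 := by
      rw [abs_pow]; exact pow_lt_one₀ (abs_nonneg s) (abs_lt.2 hs) (by omega)
    exact mul_pos (by linarith [hs.2]) (by linarith [(abs_lt.1 this).1])
  have hderiv : ∀ s ∈ Ioo (-1 : ℝ) 1, HasDerivAt R
      (2 * (1 - s ^ 2) * (∑ i ∈ range (2 * m + 1), (s ^ 2) ^ i - (2 * m + 1) * (s ^ 2) ^ m) /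
        ((1 - s) * (1 + s ^ (2 * m + 1))) ^ 2) s := by
    intro s hs
    have := (((hasDerivAt_id s).const_add 1).mul ((hasDerivAt_pow (2 * m + 1) s).const_sub 1)).div
      (((hasDerivAt_id s).const_sub 1).mul ((hasDerivAt_pow (2 * m + 1) s).const_add 1))
      (hden s hs).ne'
    refine this.congr_deriv ?_
    simp only [id, Pi.mul_apply, Nat.add_sub_cancel]
    congr 1
    push_cast
    linear_combination 2 * geom_sum_mul (s ^ 2) (2 * m + 1)
  have hR : StrictMonoOn R (Ioo (-1) 1) := by
    refine strictMonoOn_of_deriv_pos (convex_Ioo _ _)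
      (fun s hs => (hderiv s hs).continuousAt.continuousWithinAt) fun s hs => ?_
    rw [interior_Ioo] at hs
    rw [(hderiv s hs).deriv]
    have h1 : 0 < 1 - s ^ 2 := by nlinarith [hs.1, hs.2]
    have h2 := mul_pow_lt_geom_sum (sq_nonneg s) (by nlinarith [hs.1, hs.2]) (m := m) (by omega)
    have := hden s hs
    positivity
  exact hR.congr fun s hs => (geomRatio_eq_of_abs_lt ⟨m, rfl⟩ (abs_lt.2 hs)).symm

end geomRatio

theorem sum_pow_mul_pow_div_eq_geomRatio (n : ℕ) (x : ℝ) {y : ℝ} (hy : y ≠ 0) :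
    (∑ j ∈ range n, y ^ (n - 1 - j) * x ^ j) /
      (∑ j ∈ range n, (-1) ^ j * y ^ (n - 1 - j) * x ^ j) = geomRatio n (x / y) := by
  have homog : ∀ z : ℝ, ∑ j ∈ range n, y ^ (n - 1 - j) * z ^ j =
      y ^ (n - 1) * ∑ j ∈ range n, (z / y) ^ j := fun z => by
    rw [mul_sum]
    refine sum_congr rfl fun j hj => ?_
    rw [← pow_sub_mul_pow y (show j ≤ n - 1 by grind), div_pow]
    field_simp
  have alt : ∑ j ∈ range n, (-1) ^ j * y ^ (n - 1 - j) * x ^ j =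
      ∑ j ∈ range n, y ^ (n - 1 - j) * (-x) ^ j :=
    sum_congr rfl fun j _ => by rw [neg_pow]; ring
  rw [alt, homog, homog, neg_div, geomRatio, mul_div_mul_left _ _ (pow_ne_zero _ hy)]

theorem strictMonoOn_id_div {𝕜 : Type*} [Field 𝕜] [LinearOrder 𝕜] [IsStrictOrderedRing 𝕜]
    {S : Set 𝕜} {g : 𝕜 → 𝕜} (hg : ∀ x ∈ S, 0 < g x)
    (hg_anti : ∀ a ∈ S, ∀ b ∈ S, |a| ≤ |b| → g b ≤ g a) :
    StrictMonoOn (fun x => x / g x) S := by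
  intro a ha b hb hab
  rw [div_lt_div_iff₀ (hg a ha) (hg b hb)]
  rcases le_or_gt 0 a with ha0 | ha0
  · have := hg_anti a ha b hb (by rw [abs_of_nonneg ha0, abs_of_pos (by linarith)]; exact hab.le)
    nlinarith [hg a ha]
  rcases le_or_gt b 0 with hb0 | hb0
  · have := hg_anti b hb a ha (by rw [abs_of_nonpos hb0, abs_of_neg ha0]; linarith)
    nlinarith [hg b hb]
  · nlinarith [hg a ha, hg b hb]

noncomputable def superellipseHeight (N : ℕ) (x : ℝ) : ℝ := (1 - x ^ N) ^ ((1 : ℝ) / N)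

section superellipse

variable {N : ℕ}

theorem continuous_superellipseHeight : Continuous (superellipseHeight N) :=
  (continuous_const.sub (continuous_pow N)).rpow_const fun _ => Or.inr (by positivity)

theorem superellipseHeight_pos {x : ℝ} (hx : x ^ N < 1) : 0 < superellipseHeight N x :=
  rpow_pos_of_pos (sub_pos.2 hx) _

theorem superellipseHeight_neg (hN : Even N) (x : ℝ) :
    superellipseHeight N (-x) = superellipseHeight N x := by
  rw [superellipseHeight, hN.neg_pow, superellipseHeight]

theorem superellipseHeight_le_of_abs_le (hN : Even N) {a b : ℝ} (hab : |a| ≤ |b|) (hb : b ^ N ≤ 1) :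
    superellipseHeight N b ≤ superellipseHeight N a := by
  refine rpow_le_rpow (sub_nonneg.2 hb) ?_ (by positivity)
  rw [← hN.pow_abs a, ← hN.pow_abs b]
  linarith [pow_le_pow_left₀ (abs_nonneg a) hab N]

theorem abs_lt_superellipseHeight (hN : Even N) (hN0 : N ≠ 0) {x : ℝ} (hx : 2 * x ^ N < 1) :
    |x| < superellipseHeight N x := by
  rw [← pow_rpow_inv_natCast (abs_nonneg x) hN0, superellipseHeight, one_div, hN.pow_abs]
  exact rpow_lt_rpow (hN.pow_nonneg x) (by linarith) (by positivity)

theorem superellipseHeight_eq_self (hN0 : N ≠ 0) {c : ℝ} (hc : 0 ≤ c) (hcN : c ^ N = 1 / 2) :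
    superellipseHeight N c = c := by
  rw [superellipseHeight, show 1 - c ^ N = c ^ N by linarith, one_div,
    pow_rpow_inv_natCast hc hN0]

theorem two_rpow_neg_one_div_pow (hN0 : N ≠ 0) : ((2 : ℝ) ^ (-(1 : ℝ) / N)) ^ N = 1 / 2 := by
  rw [← rpow_natCast, ← rpow_mul zero_le_two, div_mul_cancel₀ _ (Nat.cast_ne_zero.2 hN0),
    rpow_neg_one, one_div]

variable {c : ℝ}

theorem two_mul_pow_lt_one_of_mem_Ioo (hN : Even N) (hN0 : N ≠ 0) (hcN : c ^ N = 1 / 2) {x : ℝ}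
    (hx : x ∈ Ioo (-c) c) : 2 * x ^ N < 1 := by
  have := pow_lt_pow_left₀ (abs_lt.2 hx) (abs_nonneg x) hN0
  rw [hN.pow_abs, hcN] at this
  linarith

theorem superellipseHeight_pos_of_mem_Ioo (hN : Even N) (hN0 : N ≠ 0) (hcN : c ^ N = 1 / 2)
    {x : ℝ} (hx : x ∈ Ioo (-c) c) : 0 < superellipseHeight N x :=
  superellipseHeight_pos
    (by linarith [two_mul_pow_lt_one_of_mem_Ioo hN hN0 hcN hx, hN.pow_nonneg x])

theorem mapsTo_div_superellipseHeight (hN : Even N) (hN0 : N ≠ 0) (hcN : c ^ N = 1 / 2) :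
    MapsTo (fun x => x / superellipseHeight N x) (Ioo (-c) c) (Ioo (-1) 1) := fun x hx => by
  have hpos := superellipseHeight_pos_of_mem_Ioo hN hN0 hcN hx
  rw [Set.mem_Ioo, ← abs_lt, abs_div, abs_of_pos hpos, div_lt_one hpos]
  exact abs_lt_superellipseHeight hN hN0 (two_mul_pow_lt_one_of_mem_Ioo hN hN0 hcN hx)

theorem continuousOn_div_superellipseHeight (hN : Even N) (hN0 : N ≠ 0) (hcN : c ^ N = 1 / 2) :
    ContinuousOn (fun x => x / superellipseHeight N x) (Ioo (-c) c) :=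
  continuousOn_id.div continuous_superellipseHeight.continuousOn fun _ hx =>
    (superellipseHeight_pos_of_mem_Ioo hN hN0 hcN hx).ne'

theorem strictMonoOn_div_superellipseHeight (hN : Even N) (hN0 : N ≠ 0) (hcN : c ^ N = 1 / 2) :
    StrictMonoOn (fun x => x / superellipseHeight N x) (Ioo (-c) c) :=
  strictMonoOn_id_div (fun _ hx => superellipseHeight_pos_of_mem_Ioo hN hN0 hcN hx)
    fun _ _ b hb hab => superellipseHeight_le_of_abs_le hN hab
      (by linarith [two_mul_pow_lt_one_of_mem_Ioo hN hN0 hcN hb, hN.pow_nonneg b])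

theorem tendsto_div_superellipseHeight_right (hN0 : N ≠ 0) (hc : 0 < c) (hcN : c ^ N = 1 / 2) :
    Tendsto (fun x => x / superellipseHeight N x) (𝓝[Ioo (-c) c] c) (𝓝 1) := by
  have hcc := superellipseHeight_eq_self hN0 hc.le hcN
  have : ContinuousAt (fun x => x / superellipseHeight N x) c :=
    continuousAt_id.div continuous_superellipseHeight.continuousAt (hcc.symm ▸ hc.ne')
  simpa [hcc, hc.ne'] using this.tendsto.mono_left nhdsWithin_le_nhds

theorem tendsto_div_superellipseHeight_left (hN : Even N) (hN0 : N ≠ 0) (hc : 0 < c)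
    (hcN : c ^ N = 1 / 2) :
    Tendsto (fun x => x / superellipseHeight N x) (𝓝[Ioo (-c) c] (-c)) (𝓝 (-1)) := by
  have hcc : superellipseHeight N (-c) = c := by
    rw [superellipseHeight_neg hN, superellipseHeight_eq_self hN0 hc.le hcN]
  have : ContinuousAt (fun x => x / superellipseHeight N x) (-c) :=
    continuousAt_id.div continuous_superellipseHeight.continuousAt (hcc.symm ▸ hc.ne')
  simpa [hcc, hc.ne'] using this.tendsto.mono_left nhdsWithin_le_nhds

end superellipse

theorem stmt_11 (k : ℕ) (hk : 2 ≤ k) (f : ℝ → ℝ → ℝ)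
    (hf : ∀ x y : ℝ, f x y =
      (∑ j ∈ Finset.range (2 * k - 1), y ^ (2 * k - 2 - j) * x ^ j) /
      (∑ j ∈ Finset.range (2 * k - 1), (-1 : ℝ) ^ j * y ^ (2 * k - 2 - j) * x ^ j))
    (y : ℝ → ℝ) (hy : ∀ x : ℝ, y x = (1 - x ^ (2 * k)) ^ ((1 : ℝ) / (2 * k)))
    (c : ℝ) (hc : c = (2 : ℝ) ^ (-(1 : ℝ) / (2 * k))) :
    ContinuousOn (fun x => f x (y x)) (Set.Ioo (-c) c) ∧
    StrictMonoOn (fun x => f x (y x)) (Set.Ioo (-c) c) ∧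
    f 0 1 = 1 ∧
    Tendsto (fun x => f x (y x)) (nhdsWithin (-c) (Set.Ioo (-c) c))
      (nhds (1 / (2 * (k : ℝ) - 1))) ∧
    Tendsto (fun x => f x (y x)) (nhdsWithin c (Set.Ioo (-c) c))
      (nhds (2 * (k : ℝ) - 1)) := by
  rw [show 2 * k - 2 = 2 * k - 1 - 1 by omega] at hf
  have hn : Odd (2 * k - 1) := ⟨k - 1, by omega⟩
  have hn_cast : ((2 * k - 1 : ℕ) : ℝ) = 2 * k - 1 := by
    rw [Nat.cast_sub (by omega)]; push_cast; ring
  have hN : Even (2 * k) := even_two_mul k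
  have hN0 : 2 * k ≠ 0 := by omega
  obtain rfl : y = superellipseHeight (2 * k) :=
    funext fun x => by rw [hy, superellipseHeight]; push_cast; rfl
  have hcN : c ^ (2 * k) = 1 / 2 := by
    have := two_rpow_neg_one_div_pow hN0; push_cast at this; rwa [hc]
  have hc0 : 0 < c := hc ▸ rpow_pos_of_pos two_pos _
  have hF : EqOn (fun x => f x (superellipseHeight (2 * k) x))
      (geomRatio (2 * k - 1) ∘ fun x => x / superellipseHeight (2 * k) x) (Ioo (-c) c) :=
    fun x hx => by
      simp only [Function.comp_apply, hf]
      exact sum_pow_mul_pow_div_eq_geomRatio _ x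
        (superellipseHeight_pos_of_mem_Ioo hN hN0 hcN hx).ne'
  refine ⟨?_, ?_, ?_, ?_, ?_⟩
  · exact ((continuous_geomRatio hn).comp_continuousOn
      (continuousOn_div_superellipseHeight hN hN0 hcN)).congr hF
  · exact ((strictMonoOn_geomRatio hn (by omega)).comp
      (strictMonoOn_div_superellipseHeight hN hN0 hcN)
      (mapsTo_div_superellipseHeight hN hN0 hcN)).congr hF.symm
  · rw [hf, sum_pow_mul_pow_div_eq_geomRatio _ 0 one_ne_zero, zero_div, geomRatio_zero hn]
  · have := ((continuous_geomRatio hn).tendsto _).comp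
      (tendsto_div_superellipseHeight_left hN hN0 hc0 hcN)
    rw [geomRatio_neg_one hn, hn_cast] at this
    exact this.congr' (eventuallyEq_of_mem self_mem_nhdsWithin hF.symm)
  · have := ((continuous_geomRatio hn).tendsto _).comp
      (tendsto_div_superellipseHeight_right hN0 hc0 hcN)
    rw [geomRatio_one hn, hn_cast] at this
    exact this.congr' (eventuallyEq_of_mem self_mem_nhdsWithin hF.symm)
end

section
/- In the stadium (rectangle of side lengths L and 2R capped by semicircles of radius R), the 2-periodic inverse magnetic billiard trajectory with exit/reentry points on the two semicircular caps and 0 < μ < R has α = L/μ + 2√(R² − μ²)/μ > 2√(R² − μ²)/μ = 2m, hence Tr = 2 - 4αβ + α²β² > 2 (hyperbolic). Here ℓ₁ = L + 2√(R² − μ²), cos θ = μ/R, β = 2 cot θ, m = 2/β = √(R² − μ²)/μ. -/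
open Real

lemma cos_div_sin_eq_of_cos_eq_div {θ μ R : ℝ} (hθ : θ ∈ Set.Icc 0 π) (hR : 0 < R)
    (hcos : cos θ = μ / R) : cos θ / sin θ = μ / √(R ^ 2 - μ ^ 2) := by
  have hsin : sin θ = √(R ^ 2 - μ ^ 2) / R := by
    rw [sin_eq_sqrt_one_sub_cos_sq hθ.1 hθ.2, hcos, ← sqrt_sq hR.le, ← sqrt_div', sqrt_sq hR.le]
    · congr 1
      field_simp
    · positivity
  rw [hcos, hsin, div_div_div_cancel_right₀ hR.ne']

lemma two_lt_trace_of_four_lt_mul {α β : ℝ} (h : 4 < α * β) :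
    2 < 2 - 4 * α * β + α ^ 2 * β ^ 2 := by
  nlinarith

theorem stmt_14_general (L R μ θ ℓ₁ α β m : ℝ) (hL : 0 < L)
    (hμ : 0 < μ) (hμR : μ < R)
    (hθ : θ ∈ Set.Ioo 0 (π / 2)) (hcos : Real.cos θ = μ / R)
    (hℓ : ℓ₁ = L + 2 * Real.sqrt (R ^ 2 - μ ^ 2))
    (hβ : β = 2 * (Real.cos θ / Real.sin θ))
    (hm : m = Real.sqrt (R ^ 2 - μ ^ 2) / μ)
    (hα : α = ℓ₁ / μ) :
    m = 2 / β ∧ α = L / μ + 2 * m ∧ 2 * m < α ∧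
    2 < 2 - 4 * α * β + α ^ 2 * β ^ 2 := by
  have hR : 0 < R := hμ.trans hμR
  have hs : 0 < √(R ^ 2 - μ ^ 2) := sqrt_pos.2 (by nlinarith)
  have hθ' : θ ∈ Set.Icc 0 π := ⟨hθ.1.le, by linarith [hθ.2, pi_pos]⟩
  have hβμ : β = 2 * μ / √(R ^ 2 - μ ^ 2) := by
    rw [hβ, cos_div_sin_eq_of_cos_eq_div hθ' hR hcos, mul_div_assoc]
  have hβpos : 0 < β := by rw [hβμ]; positivity
  have hmβ : m = 2 / β := by rw [hm, hβμ]; field_simp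
  have hαm : α = L / μ + 2 * m := by rw [hα, hℓ, hm]; field_simp
  have hmα : 2 * m < α := by rw [hαm]; linarith [div_pos hL hμ]
  refine ⟨hmβ, hαm, hmα, two_lt_trace_of_four_lt_mul ?_⟩
  calc (4 : ℝ) = 2 * m * β := by rw [hmβ]; field_simp; norm_num
    _ < α * β := mul_lt_mul_of_pos_right hmα hβpos

theorem stmt_14 (L R μ θ ℓ₁ α β m : ℝ) (hL : 0 < L) (hR : 0 < R)
    (hμ : 0 < μ) (hμR : μ < R)
    (hθ : θ ∈ Set.Ioo 0 (π / 2)) (hcos : Real.cos θ = μ / R)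
    (hℓ : ℓ₁ = L + 2 * Real.sqrt (R ^ 2 - μ ^ 2))
    (hβ : β = 2 * (Real.cos θ / Real.sin θ))
    (hm : m = Real.sqrt (R ^ 2 - μ ^ 2) / μ)
    (hα : α = ℓ₁ / μ) :
    m = 2 / β ∧ α = L / μ + 2 * m ∧ 2 * m < α ∧
    2 < 2 - 4 * α * β + α ^ 2 * β ^ 2 :=
  stmt_14_general L R μ θ ℓ₁ α β m hL hμ hμR hθ hcos hℓ hβ hm hα
end

section
/- For the circle of radius R and 0 < μ < R, the equation cos θ = (3μ + √(4R² − 3μ²))/(4R) defines the unique θ ∈ (0, π/3) satisfying sin(π/3 − θ) = μ sin θ / √(R² + μ² − 2Rμ cos θ). -/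
/-!
Let `d = √(R² + μ² - 2Rμ cos θ)` be the third side of the triangle with sides `R`, `μ` enclosing
the angle `θ`. By the law of sines the equation says that the angle opposite `μ` is `π/3 - θ`, so
the angle opposite `R` is `2π/3`, and the law of cosines gives `R² = d² + μd + μ²`. This pins down
`d = (√(4R² - 3μ²) - μ)/2` and then `R cos θ = μ + d/2` pins down `θ`.
-/

open Real Set

/-- Both sides say `d e^{i(π/3-θ)} = R - μ e^{-iθ}`, the right one after multiplying by `e^{iθ}`. -/
lemma sin_cos_pi_div_three_sub_mul_iff (R μ d θ : ℝ) :
    (sin (π / 3 - θ) * d = μ * sin θ ∧ cos (π / 3 - θ) * d = R - μ * cos θ) ↔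
      (R * cos θ = μ + d / 2 ∧ R * sin θ = √3 / 2 * d) := by
  rw [sin_sub, cos_sub, sin_pi_div_three, cos_pi_div_three]
  have hθ := sin_sq_add_cos_sq θ
  constructor
  · rintro ⟨hs, hc⟩
    constructor
    · linear_combination sin θ * hs - cos θ * hc + (μ + d / 2) * hθ
    · linear_combination √3 / 2 * d * hθ - sin θ * hc - cos θ * hs
  · rintro ⟨hc, hs⟩
    constructor
    · linear_combination sin θ * hc - cos θ * hs
    · linear_combination R * hθ - cos θ * hc - sin θ * hs

lemma cos_mul_eq_of_sin_mul_eq {α d x y : ℝ} (h : sin α * d = y) (hd : d ^ 2 = x ^ 2 + y ^ 2)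
    (hα : 0 ≤ cos α) (hd₀ : 0 ≤ d) (hx : 0 ≤ x) : cos α * d = x := by
  refine (pow_left_inj₀ (mul_nonneg hα hd₀) hx two_ne_zero).1 ?_
  linear_combination d ^ 2 * cos_sq_add_sin_sq α - (sin α * d + y) * h + hd

lemma sq_add_mul_add_sq_eq_of_mul_cos_of_mul_sin {R μ d θ : ℝ} (hc : R * cos θ = μ + d / 2)
    (hs : R * sin θ = √3 / 2 * d) : d ^ 2 + μ * d + μ ^ 2 = R ^ 2 := by
  have h3 : √3 ^ 2 = 3 := sq_sqrt (by norm_num)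
  linear_combination R ^ 2 * sin_sq_add_cos_sq θ - (R * cos θ + μ + d / 2) * hc
    - (R * sin θ + √3 / 2 * d) * hs - d ^ 2 / 4 * h3

lemma two_mul_add_eq_sqrt {R μ d : ℝ} (h : d ^ 2 + μ * d + μ ^ 2 = R ^ 2) (hd : 0 ≤ 2 * d + μ) :
    2 * d + μ = √(4 * R ^ 2 - 3 * μ ^ 2) :=
  ((sqrt_eq_iff_eq_sq (by nlinarith) hd).2 (by linear_combination -4 * h)).symm

lemma cos_eq_of_mul_cos_of_mul_sin {R μ d θ : ℝ} (hR : R ≠ 0) (hd : 0 ≤ 2 * d + μ)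
    (hc : R * cos θ = μ + d / 2) (hs : R * sin θ = √3 / 2 * d) :
    cos θ = (3 * μ + √(4 * R ^ 2 - 3 * μ ^ 2)) / (4 * R) := by
  rw [← two_mul_add_eq_sqrt (sq_add_mul_add_sq_eq_of_mul_cos_of_mul_sin hc hs) hd,
    eq_div_iff (by positivity)]
  linear_combination 4 * hc

lemma exists_mem_Ioo_mul_cos_mul_sin {R μ d : ℝ} (hR : 0 < R) (hμ : 0 < μ) (hd : 0 < d)
    (h : d ^ 2 + μ * d + μ ^ 2 = R ^ 2) :
    ∃ θ ∈ Ioo 0 (π / 3), R * cos θ = μ + d / 2 ∧ R * sin θ = √3 / 2 * d := by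
  set c := (μ + d / 2) / R
  have hc₁ : c < 1 := by
    rw [div_lt_one hR]
    nlinarith
  have hc₂ : 1 / 2 < c := by
    rw [lt_div_iff₀ hR]
    nlinarith
  have hcos : cos (arccos c) = c := cos_arccos (by linarith) hc₁.le
  have hpos : 0 < arccos c := arccos_pos.2 hc₁
  have hlt : arccos c < π / 3 := by
    rw [← arccos_eq_of_eq_cos (by positivity) (by linarith [pi_pos]) cos_pi_div_three.symm]
    exact arccos_lt_arccos (by norm_num) hc₂ hc₁.le
  have hc : R * cos (arccos c) = μ + d / 2 := by
    rw [hcos, mul_div_cancel₀ _ hR.ne']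
  refine ⟨arccos c, ⟨hpos, hlt⟩, hc, ?_⟩
  have hsin : 0 < sin (arccos c) := sin_pos_of_pos_of_lt_pi hpos (by linarith [pi_pos])
  refine (pow_left_inj₀ (by positivity) (by positivity) two_ne_zero).1 ?_
  have h3 : √3 ^ 2 = 3 := sq_sqrt (by norm_num)
  linear_combination R ^ 2 * sin_sq_add_cos_sq (arccos c) - (R * cos (arccos c) + μ + d / 2) * hc
    - h - d ^ 2 / 4 * h3

theorem stmt_15 (R μ : ℝ) (hR : 0 < R) (hμ : 0 < μ) (hμR : μ < R) :
    ∃ θ : ℝ, (θ ∈ Set.Ioo 0 (π / 3) ∧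
        Real.sin (π / 3 - θ) =
          μ * Real.sin θ / Real.sqrt (R ^ 2 + μ ^ 2 - 2 * R * μ * Real.cos θ) ∧
        Real.cos θ = (3 * μ + Real.sqrt (4 * R ^ 2 - 3 * μ ^ 2)) / (4 * R)) ∧
      ∀ θ' ∈ Set.Ioo 0 (π / 3),
        Real.sin (π / 3 - θ') =
          μ * Real.sin θ' / Real.sqrt (R ^ 2 + μ ^ 2 - 2 * R * μ * Real.cos θ') →
        θ' = θ := by
  set q := √(4 * R ^ 2 - 3 * μ ^ 2)
  have hq : q ^ 2 = 4 * R ^ 2 - 3 * μ ^ 2 := sq_sqrt (by nlinarith)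
  have hd : 0 < (q - μ) / 2 := by nlinarith [sqrt_nonneg (4 * R ^ 2 - 3 * μ ^ 2)]
  obtain ⟨θ, hθ, hc, hs⟩ :=
    exists_mem_Ioo_mul_cos_mul_sin hR hμ hd (by linear_combination hq / 4)
  have hθcos := cos_eq_of_mul_cos_of_mul_sin hR.ne' (by positivity) hc hs
  refine ⟨θ, ⟨hθ, ?_, hθcos⟩, ?_⟩
  · rw [show R ^ 2 + μ ^ 2 - 2 * R * μ * cos θ = ((q - μ) / 2) ^ 2 by
        linear_combination -2 * μ * hc - hq / 4,
      sqrt_sq hd.le, eq_div_iff hd.ne']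
    exact ((sin_cos_pi_div_three_sub_mul_iff R μ _ θ).2 ⟨hc, hs⟩).1
  · rintro θ' ⟨hθ'₀, hθ'₁⟩ h
    have hx : 0 < R - μ * cos θ' := by nlinarith [cos_le_one θ']
    have hlaw : R ^ 2 + μ ^ 2 - 2 * R * μ * cos θ' = (R - μ * cos θ') ^ 2 + (μ * sin θ') ^ 2 := by
      linear_combination -μ ^ 2 * sin_sq_add_cos_sq θ'
    set d := √(R ^ 2 + μ ^ 2 - 2 * R * μ * cos θ')
    have hd' : 0 < d := sqrt_pos.2 (by rw [hlaw]; positivity)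
    have hs' : sin (π / 3 - θ') * d = μ * sin θ' := by rwa [eq_div_iff hd'.ne'] at h
    have hc' : cos (π / 3 - θ') * d = R - μ * cos θ' :=
      cos_mul_eq_of_sin_mul_eq hs' (by rw [sq_sqrt (by rw [hlaw]; positivity), hlaw])
        (cos_nonneg_of_mem_Icc ⟨by linarith [pi_pos], by linarith⟩) hd'.le hx.le
    obtain ⟨hRc', hRs'⟩ := (sin_cos_pi_div_three_sub_mul_iff R μ d θ').1 ⟨hs', hc'⟩
    refine injOn_cos ⟨hθ'₀.le, by linarith [pi_pos]⟩ ⟨hθ.1.le, by linarith [pi_pos, hθ.2]⟩ ?_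
    rw [cos_eq_of_mul_cos_of_mul_sin hR.ne' (by positivity) hRc' hRs', hθcos]
end
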